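/- For any product perturbation h₁(z|x) = h(x)·h₂(z) of the trivial representation p(z|x) = p(z), with ∫ h₂(z) dz = 0 and ∫ h₂(z)²/p(z) dz > 0 and h(x) not constant, the ratio of second-order variations satisfies δ²I(X;Z) / δ²I(Y;Z) = β₀[h(x)]. Consequently (inf over h(x) of β₀[h(x)])⁻¹ is a lower bound on the slope at the origin of the Pareto frontier of I(Y;Z) versus I(X;Z) over all representations Z. -/

import Mathlib

open Filter Asymptotics
open scoped BigOperators Topology

/-- A joint probability distribution `p(x,y)` on finite types `X` and `Y`. -/
structure JointDist (X Y : Type) [Fintype X] [Fintype Y] where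
  p : X → Y → ℝ
  nonneg : ∀ x y, 0 ≤ p x y
  sum_one : ∑ x, ∑ y, p x y = 1

variable {X Y Z : Type} [Fintype X] [Fintype Y] [Fintype Z]

/-- The marginal distribution `p(x)` of `X`. -/
def JointDist.pX (P : JointDist X Y) (x : X) : ℝ := ∑ y, P.p x y

/-- The marginal distribution `p(y)` of `Y`. -/
def JointDist.pY (P : JointDist X Y) (y : Y) : ℝ := ∑ x, P.p x y

/-- An encoder: a conditional distribution `p(z|x)` specifying a representation `Z` of `X`;
together with `p(x,y)` it determines the Markov chain `Z ← X ↔ Y`. -/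
structure Encoder (X Z : Type) [Fintype X] [Fintype Z] where
  c : X → Z → ℝ
  nonneg : ∀ x z, 0 ≤ c x z
  sum_one : ∀ x, ∑ z, c x z = 1

/-- The mutual information `I(X;Z)` of the representation given by encoder `e`,
where `p(x,z) = p(x) p(z|x)` and `p(z) = ∑ x, p(x) p(z|x)`. -/
noncomputable def IXZ (P : JointDist X Y) (e : Encoder X Z) : ℝ :=
  ∑ x, ∑ z, P.pX x * e.c x z *
    Real.log (P.pX x * e.c x z / (P.pX x * ∑ x', P.pX x' * e.c x' z))

/-- The mutual information `I(Y;Z)`, using the Markov chain `Z ← X ↔ Y`,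
i.e. `p(y,z) = ∑ x, p(x,y) p(z|x)`. -/
noncomputable def IYZ (P : JointDist X Y) (e : Encoder X Z) : ℝ :=
  ∑ y, ∑ z, (∑ x, P.p x y * e.c x z) *
    Real.log ((∑ x, P.p x y * e.c x z) / (P.pY y * ∑ x, P.pX x * e.c x z))

/-- The Information Bottleneck objective `IB_β(X,Y;Z) = I(X;Z) − β·I(Y;Z)`. -/
noncomputable def IB (P : JointDist X Y) (β : ℝ) (e : Encoder X Z) : ℝ :=
  IXZ P e - β * IYZ P e

/-- `(X,Y)` is `IB_β`-learnable if some representation `Z` (given by some encoder `p₁(z|x)`)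
achieves `IB_β(X,Y;Z) < 0`, where `0` is the value attained by the trivial representation
`p(z|x) = p(z)`. -/
def IBLearnable (P : JointDist X Y) (β : ℝ) : Prop :=
  ∃ (n : ℕ) (e : Encoder X (Fin n)), IB P β e < 0

/-- The functional `β₀[h(x)] = ( E_x[h²] − (E_x[h])² ) / ( E_y[(E_{x|y}[h])²] − (E_x[h])² )`,
where `E_{x|y}[h] = (∑ x, p(x,y) h(x)) / p(y)`, so that
`E_y[(E_{x|y}[h])²] = ∑ y, (∑ x, p(x,y) h(x))² / p(y)`. -/
noncomputable def beta0Func (P : JointDist X Y) (h : X → ℝ) : ℝ :=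
  ((∑ x, P.pX x * (h x) ^ 2) - (∑ x, P.pX x * h x) ^ 2) /
    ((∑ y, (∑ x, P.p x y * h x) ^ 2 / P.pY y) - (∑ x, P.pX x * h x) ^ 2)

/-- The slope at the origin of the Pareto frontier of `I(Y;Z)` versus `I(X;Z)`: following the
paper's identification (Section "Learnability and the Information Plane"), it is the supremum of
the achievable ratios `I(Y;Z)/I(X;Z)` over all representations `Z` of `X`. -/
noncomputable def paretoSlopeOrigin (P : JointDist X Y) : ℝ :=
  sSup {r : ℝ | ∃ (n : ℕ) (e : Encoder X (Fin n)), 0 < IXZ P e ∧ r = IYZ P e / IXZ P e}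

/-- The second-order variation `δ²I(X;Z)` at the trivial representation `p(z|x) = q(z)` for a
perturbation `h₁(z|x)`:
`(1/2)[ ∑ p(x)/q(z) h₁(z|x)² − ∑_z (∑_x p(x) h₁(z|x))²/q(z) ]`. -/
noncomputable def delta2IXZtrivial (P : JointDist X Y) (q : Z → ℝ) (h₁ : X → Z → ℝ) : ℝ :=
  (1 / 2) * ((∑ x, ∑ z, P.pX x / q z * (h₁ x z) ^ 2)
    - ∑ z, (∑ x, P.pX x * h₁ x z) ^ 2 / q z)

/-- The second-order variation `δ²I(Y;Z)` at the trivial representation `p(z|x) = q(z)` for a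
perturbation `h₁(z|x)`:
`(1/2)[ ∑_{y,z} (∑_x p(x,y) h₁(z|x))²/(p(y)q(z)) − ∑_z (∑_x p(x) h₁(z|x))²/q(z) ]`. -/
noncomputable def delta2IYZtrivial (P : JointDist X Y) (q : Z → ℝ) (h₁ : X → Z → ℝ) : ℝ :=
  (1 / 2) * ((∑ y, ∑ z, (∑ x, P.p x y * h₁ x z) ^ 2 / (P.pY y * q z))
    - ∑ z, (∑ x, P.pX x * h₁ x z) ^ 2 / q z)

-- ==================== auxiliary lemmas ====================

lemma IBaux.pX_nonneg (P : JointDist X Y) (x : X) : 0 ≤ P.pX x :=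
  Finset.sum_nonneg fun y _ => P.nonneg x y

lemma IBaux.pY_nonneg (P : JointDist X Y) (y : Y) : 0 ≤ P.pY y :=
  Finset.sum_nonneg fun x _ => P.nonneg x y

lemma IBaux.p_le_pX (P : JointDist X Y) (x : X) (y : Y) : P.p x y ≤ P.pX x :=
  Finset.single_le_sum (fun y' _ => P.nonneg x y') (Finset.mem_univ y)

lemma IBaux.sum_pX (P : JointDist X Y) : ∑ x, P.pX x = 1 := by
  simp only [JointDist.pX]; exact P.sum_one

lemma IBaux.sum_pY (P : JointDist X Y) : ∑ y, P.pY y = 1 := by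
  simp only [JointDist.pY]; rw [Finset.sum_comm]; exact P.sum_one

-- log-sum inequality
lemma IBaux.logsum {ι : Type*} (s : Finset ι) (α β : ι → ℝ)
    (hα : ∀ i ∈ s, 0 ≤ α i) (hβ : ∀ i ∈ s, 0 ≤ β i)
    (h0 : ∀ i ∈ s, β i = 0 → α i = 0) :
    (∑ i ∈ s, α i) * Real.log ((∑ i ∈ s, α i) / (∑ i ∈ s, β i)) ≤
      ∑ i ∈ s, α i * Real.log (α i / β i) := by
  set T := ∑ i ∈ s, α i with hT
  set Sb := ∑ i ∈ s, β i with hSb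
  rcases eq_or_lt_of_le (Finset.sum_nonneg hα) with hT0 | hT0
  · have hall : ∀ i ∈ s, α i = 0 := (Finset.sum_eq_zero_iff_of_nonneg hα).mp hT0.symm
    have hT' : T = 0 := hT.trans hT0.symm
    have h2 : ∑ i ∈ s, α i * Real.log (α i / β i) = 0 :=
      Finset.sum_eq_zero fun i hi => by rw [hall i hi]; ring
    rw [hT', h2]
    simp
  · have hSb0 : 0 < Sb := by
      obtain ⟨i, hi, hαi⟩ : ∃ i ∈ s, α i ≠ 0 := by
        by_contra hc
        push_neg at hc
        have : T = 0 := Finset.sum_eq_zero fun i hi => hc i hi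
        linarith
      have hβi : 0 < β i := by
        rcases lt_or_eq_of_le (hβ i hi) with h | h
        · exact h
        · exact absurd (h0 i hi h.symm) hαi
      calc (0:ℝ) < β i := hβi
        _ ≤ Sb := Finset.single_le_sum hβ hi
    have hR : 0 < T / Sb := div_pos hT0 hSb0
    have key : ∀ i ∈ s, α i * Real.log (T / Sb) + α i - β i * (T / Sb)
        ≤ α i * Real.log (α i / β i) := by
      intro i hi
      rcases eq_or_lt_of_le (hα i hi) with h0i | h0i
      · rw [← h0i]
        have : 0 ≤ β i * (T / Sb) := mul_nonneg (hβ i hi) hR.le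
        simp
        linarith
      · have hβi : 0 < β i := by
          rcases lt_or_eq_of_le (hβ i hi) with h | h
          · exact h
          · exact absurd (h0 i hi h.symm) (ne_of_gt h0i)
        have hq : 0 < α i / β i := div_pos h0i hβi
        have hlog : Real.log ((T / Sb) / (α i / β i)) ≤ (T / Sb) / (α i / β i) - 1 :=
          Real.log_le_sub_one_of_pos (div_pos hR hq)
        rw [Real.log_div hR.ne' hq.ne'] at hlog
        have hmul := mul_le_mul_of_nonneg_left hlog h0i.le
        have hident : α i * ((T / Sb) / (α i / β i)) = β i * (T / Sb) := by
          field_simp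
        nlinarith [hmul, hident]
    calc T * Real.log (T / Sb)
        = ∑ i ∈ s, (α i * Real.log (T / Sb) + α i - β i * (T / Sb)) := by
          rw [Finset.sum_sub_distrib, Finset.sum_add_distrib, ← Finset.sum_mul,
            ← Finset.sum_mul, ← hT, ← hSb]
          have : Sb * (T / Sb) = T := by field_simp
          rw [this]; ring
      _ ≤ ∑ i ∈ s, α i * Real.log (α i / β i) := Finset.sum_le_sum key

-- Data processing inequality
lemma IBaux.dpi (P : JointDist X Y) (e : Encoder X Z) : IYZ P e ≤ IXZ P e := by
  set q : Z → ℝ := fun z => ∑ x, P.pX x * e.c x z with hqdef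
  have hqnn : ∀ z, 0 ≤ q z := fun z =>
    Finset.sum_nonneg fun x _ => mul_nonneg (IBaux.pX_nonneg P x) (e.nonneg x z)
  have hIXZ : IXZ P e = ∑ z, ∑ y, ∑ x, (P.p x y * e.c x z) *
      Real.log ((P.pX x * e.c x z) / (P.pX x * q z)) := by
    rw [IXZ, Finset.sum_comm]
    refine Finset.sum_congr rfl fun z _ => ?_
    rw [Finset.sum_comm]
    refine Finset.sum_congr rfl fun x _ => ?_
    rw [JointDist.pX, Finset.sum_mul, Finset.sum_mul]
  have hIYZ : IYZ P e = ∑ z, ∑ y, (∑ x, P.p x y * e.c x z) *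
      Real.log ((∑ x, P.p x y * e.c x z) / (P.pY y * q z)) := by
    rw [IYZ, Finset.sum_comm]
  rw [hIXZ, hIYZ]
  refine Finset.sum_le_sum fun z _ => Finset.sum_le_sum fun y _ => ?_
  have hα : ∀ x ∈ Finset.univ, (0:ℝ) ≤ P.p x y * e.c x z :=
    fun x _ => mul_nonneg (P.nonneg x y) (e.nonneg x z)
  have hβ : ∀ x ∈ Finset.univ, (0:ℝ) ≤ P.p x y * q z :=
    fun x _ => mul_nonneg (P.nonneg x y) (hqnn z)
  have h0 : ∀ x ∈ Finset.univ, P.p x y * q z = 0 → P.p x y * e.c x z = 0 := by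
    intro x _ hx
    rcases mul_eq_zero.mp hx with h | h
    · rw [h, zero_mul]
    · have hterm : ∀ x' ∈ Finset.univ, P.pX x' * e.c x' z = 0 := by
        refine (Finset.sum_eq_zero_iff_of_nonneg ?_).mp h
        exact fun x' _ => mul_nonneg (IBaux.pX_nonneg P x') (e.nonneg x' z)
      by_cases hp : P.p x y = 0
      · rw [hp, zero_mul]
      · have hpX : 0 < P.pX x :=
          lt_of_lt_of_le (lt_of_le_of_ne (P.nonneg x y) (Ne.symm hp)) (IBaux.p_le_pX P x y)
        have := hterm x (Finset.mem_univ x)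
        have hc : e.c x z = 0 := by
          rcases mul_eq_zero.mp this with h' | h'
          · exact absurd h' hpX.ne'
          · exact h'
        rw [hc, mul_zero]
  have hsumβ : ∑ x, P.p x y * q z = P.pY y * q z := by
    rw [JointDist.pY, Finset.sum_mul]
  calc (∑ x, P.p x y * e.c x z) *
        Real.log ((∑ x, P.p x y * e.c x z) / (P.pY y * q z))
      = (∑ x, P.p x y * e.c x z) *
        Real.log ((∑ x, P.p x y * e.c x z) / (∑ x, P.p x y * q z)) := by rw [hsumβ]
    _ ≤ ∑ x, (P.p x y * e.c x z) * Real.log ((P.p x y * e.c x z) / (P.p x y * q z)) :=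
        IBaux.logsum Finset.univ _ _ hα hβ h0
    _ = ∑ x, (P.p x y * e.c x z) * Real.log ((P.pX x * e.c x z) / (P.pX x * q z)) := by
        refine Finset.sum_congr rfl fun x _ => ?_
        by_cases hp : P.p x y = 0
        · rw [hp]; ring_nf
        · have hppos : 0 < P.p x y := lt_of_le_of_ne (P.nonneg x y) (Ne.symm hp)
          have hpX : 0 < P.pX x := lt_of_lt_of_le hppos (IBaux.p_le_pX P x y)
          rw [mul_div_mul_left _ _ hppos.ne', mul_div_mul_left _ _ hpX.ne']

noncomputable def phiIB (t : ℝ) : ℝ :=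
  (1/2 + t) * Real.log (1 + 2*t) + (1/2 - t) * Real.log (1 - 2*t)

lemma phiIB_zero : phiIB 0 = 0 := by simp [phiIB]

lemma IBaux.log_taylor {x : ℝ} (hx : |x| ≤ 1/2) :
    |Real.log (1 - x) - (-x - x^2/2)| ≤ 4 * |x|^3 := by
  have h1 : |x| < 1 := lt_of_le_of_lt hx (by norm_num)
  have h := Real.abs_log_sub_add_sum_range_le h1 2
  have hsum : ∑ i ∈ Finset.range 2, x ^ (i + 1) / (i + 1) = x + x^2/2 := by
    simp [Finset.sum_range_succ]
    norm_num
  rw [hsum] at h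
  have h2 : |x| ^ 3 / (1 - |x|) ≤ 4 * |x|^3 := by
    have hd : (1:ℝ)/2 ≤ 1 - |x| := by linarith
    have h3 : (0:ℝ) ≤ |x|^3 := by positivity
    rw [div_le_iff₀ (by linarith)]
    nlinarith
  calc |Real.log (1 - x) - (-x - x^2/2)| = |x + x^2/2 + Real.log (1-x)| := by ring_nf
    _ ≤ |x|^3 / (1 - |x|) := h
    _ ≤ 4 * |x|^3 := h2

lemma IBaux.phiIB_taylor {t : ℝ} (ht : |t| ≤ 1/4) : |phiIB t - 2*t^2| ≤ 48 * |t|^3 := by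
  have h2t : |(2:ℝ)*t| ≤ 1/2 := by rw [abs_mul]; rw [abs_two]; linarith [abs_nonneg t]
  have h2t' : |(-2:ℝ)*t| ≤ 1/2 := by rw [abs_mul]; simp; linarith [abs_nonneg t]
  have hA := IBaux.log_taylor (x := -2*t) h2t'
  have hB := IBaux.log_taylor (x := 2*t) h2t
  set r1 : ℝ := Real.log (1 - (-2*t)) - (-(-2*t) - (-2*t)^2/2) with hr1
  set r2 : ℝ := Real.log (1 - 2*t) - (-(2*t) - (2*t)^2/2) with hr2
  have e1 : Real.log (1 + 2*t) = 2*t - 2*t^2 + r1 := by rw [hr1]; ring_nf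
  have e2 : Real.log (1 - 2*t) = -(2*t) - 2*t^2 + r2 := by rw [hr2]; ring_nf
  have habs : |(-2:ℝ)*t|^3 = 8 * |t|^3 := by rw [abs_mul]; simp; rw [mul_pow]; norm_num
  have habs2 : |(2:ℝ)*t|^3 = 8 * |t|^3 := by rw [abs_mul, abs_two, mul_pow]; norm_num
  rw [habs] at hA
  rw [habs2] at hB
  have hmain : phiIB t - 2*t^2 = (1/2 + t) * r1 + (1/2 - t) * r2 := by
    rw [phiIB, e1, e2]; ring
  have hb1 : |1/2 + t| ≤ 3/4 := by
    rw [abs_le] at ht ⊢; constructor <;> linarith [ht.1, ht.2]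
  have hb2 : |1/2 - t| ≤ 3/4 := by
    rw [abs_le] at ht ⊢; constructor <;> linarith [ht.1, ht.2]
  calc |phiIB t - 2*t^2| = |(1/2 + t) * r1 + (1/2 - t) * r2| := by rw [hmain]
    _ ≤ |(1/2 + t) * r1| + |(1/2 - t) * r2| := abs_add_le _ _
    _ = |1/2 + t| * |r1| + |1/2 - t| * |r2| := by rw [abs_mul, abs_mul]
    _ ≤ (3/4) * (4 * (8 * |t|^3)) + (3/4) * (4 * (8 * |t|^3)) :=
        add_le_add (mul_le_mul hb1 hA (abs_nonneg _) (by norm_num))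
          (mul_le_mul hb2 hB (abs_nonneg _) (by norm_num))
    _ = 48 * |t|^3 := by ring

lemma IBaux.phiIB_lim : Tendsto (fun s : ℝ => phiIB s / s^2) (𝓝[≠] (0:ℝ)) (𝓝 2) := by
  have key : Tendsto (fun s : ℝ => phiIB s / s^2 - 2) (𝓝[≠] (0:ℝ)) (𝓝 0) := by
    apply squeeze_zero_norm' (a := fun s : ℝ => 48 * |s|)
    · have h1 : ∀ᶠ s : ℝ in 𝓝[≠] (0:ℝ), |s| ≤ 1/4 := by
        have : Set.Ioo (-(1/4) : ℝ) (1/4) ∈ 𝓝 (0:ℝ) := Ioo_mem_nhds (by norm_num) (by norm_num)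
        exact eventually_nhdsWithin_of_eventually_nhds
          (eventually_of_mem this fun s hs => abs_le.mpr ⟨hs.1.le, hs.2.le⟩)
      have h2 : ∀ᶠ s : ℝ in 𝓝[≠] (0:ℝ), s ≠ 0 := eventually_mem_nhdsWithin
      filter_upwards [h1, h2] with s hs hs0
      have hs2 : (0:ℝ) < s^2 := by positivity
      have := IBaux.phiIB_taylor hs
      rw [Real.norm_eq_abs]
      have heq : phiIB s / s^2 - 2 = (phiIB s - 2*s^2) / s^2 := by field_simp
      rw [heq, abs_div, abs_of_pos hs2, div_le_iff₀ hs2]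
      calc |phiIB s - 2*s^2| ≤ 48 * |s|^3 := this
        _ = 48 * |s| * s^2 := by rw [pow_succ, sq_abs]; ring
    · have : Tendsto (fun s : ℝ => 48 * |s|) (𝓝 (0:ℝ)) (𝓝 (48 * |0|)) :=
        (continuous_const.mul continuous_abs).tendsto 0
      simpa using this.mono_left nhdsWithin_le_nhds
  have := key.add (tendsto_const_nhds (x := (2:ℝ)))
  simpa using this

lemma IBaux.tendsto_phiIB_scaled (c : ℝ) :
    Tendsto (fun t : ℝ => phiIB (t*c) / t^2) (𝓝[≠] (0:ℝ)) (𝓝 (2*c^2)) := by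
  rcases eq_or_ne c 0 with rfl | hc
  · simp only [mul_zero, phiIB_zero, zero_div]
    simpa using tendsto_const_nhds (x := (0:ℝ)) (f := 𝓝[≠] (0:ℝ))
  · have hcomp : Tendsto (fun t : ℝ => t*c) (𝓝[≠] (0:ℝ)) (𝓝[≠] (0:ℝ)) := by
      rw [tendsto_nhdsWithin_iff]
      constructor
      · have : Tendsto (fun t : ℝ => t*c) (𝓝 0) (𝓝 (0*c)) :=
          (continuous_mul_right c).tendsto 0
        simpa using this.mono_left nhdsWithin_le_nhds
      · filter_upwards [eventually_mem_nhdsWithin] with t ht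
        exact mul_ne_zero ht hc
    have h1 : Tendsto (fun t : ℝ => phiIB (t*c) / (t*c)^2 * c^2) (𝓝[≠] (0:ℝ))
        (𝓝 (2 * c^2)) := (IBaux.phiIB_lim.comp hcomp).mul_const _
    apply h1.congr'
    filter_upwards [eventually_mem_nhdsWithin] with t ht
    have : (t*c)^2 = t^2 * c^2 := by ring
    rw [this, div_mul_eq_div_div]
    rw [div_mul_cancel₀]
    positivity

lemma IBaux.tendsto_phiIB_sum {X : Type} [Fintype X] (w u : X → ℝ) :
    Tendsto (fun t : ℝ => (∑ x, w x * phiIB (t * u x)) / t^2) (𝓝[≠] (0:ℝ))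
      (𝓝 (2 * ∑ x, w x * (u x)^2)) := by
  have heq : ∀ t : ℝ, (∑ x, w x * phiIB (t * u x)) / t^2
      = ∑ x, w x * (phiIB (t * u x) / t^2) := by
    intro t
    rw [Finset.sum_div]
    exact Finset.sum_congr rfl fun x _ => (mul_div_assoc _ _ _)
  simp only [heq]
  have h2 : (2 : ℝ) * ∑ x, w x * (u x)^2 = ∑ x, w x * (2 * (u x)^2) := by
    rw [Finset.mul_sum]; exact Finset.sum_congr rfl fun x _ => by ring
  rw [h2]
  exact tendsto_finset_sum _ fun x _ =>
    ((IBaux.tendsto_phiIB_scaled (u x)).const_mul (w x)).congr fun t => by ring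


/-- For any product perturbation `h₁(z|x) = h(x)·h₂(z)` of the trivial
representation `p(z|x) = q(z)`, with `∑ z, h₂(z) = 0`, `∑ z, h₂(z)²/q(z) > 0` and `h` not
constant, the ratio of second-order variations satisfies `δ²I(X;Z)/δ²I(Y;Z) = β₀[h(x)]`.
Consequently `(inf_h β₀[h(x)])⁻¹` is a lower bound on the slope at the origin of the Pareto
frontier of `I(Y;Z)` versus `I(X;Z)`: `(β₀[h])⁻¹ ≤` the slope, for every `h` whose denominator
is positive. -/
theorem delta2_ratio_eq_beta0Func_and_pareto_bound (P : JointDist X Y)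
    (q : Z → ℝ) (hq : ∀ z, 0 < q z) (hq1 : ∑ z, q z = 1) :
    (∀ (h : X → ℝ) (h₂ : Z → ℝ), (∑ z, h₂ z = 0) → (0 < ∑ z, (h₂ z) ^ 2 / q z) →
      (¬ ∃ c : ℝ, ∀ x, h x = c) →
      delta2IXZtrivial P q (fun x z => h x * h₂ z) /
          delta2IYZtrivial P q (fun x z => h x * h₂ z) = beta0Func P h) ∧
    ∀ h : X → ℝ,
      (∑ x, P.pX x * h x) ^ 2 < (∑ y, (∑ x, P.p x y * h x) ^ 2 / P.pY y) →
      (beta0Func P h)⁻¹ ≤ paretoSlopeOrigin P := by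
  constructor
  · -- Part 1: the algebraic identity
    intro h h₂ hs2 hSpos _
    have einner : ∀ (g : X → ℝ) z, (∑ x, g x * (h x * h₂ z)) = (∑ x, g x * h x) * h₂ z := by
      intro g z
      rw [Finset.sum_mul]
      exact Finset.sum_congr rfl fun x _ => by ring
    have e1 : (∑ x, ∑ z, P.pX x / q z * (h x * h₂ z) ^ 2)
        = (∑ x, P.pX x * h x ^ 2) * (∑ z, h₂ z ^ 2 / q z) := by
      rw [Finset.sum_mul_sum]
      exact Finset.sum_congr rfl fun x _ => Finset.sum_congr rfl fun z _ => by ring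
    have e2 : (∑ z, (∑ x, P.pX x * (h x * h₂ z)) ^ 2 / q z)
        = (∑ x, P.pX x * h x) ^ 2 * (∑ z, h₂ z ^ 2 / q z) := by
      rw [Finset.mul_sum]
      refine Finset.sum_congr rfl fun z _ => ?_
      rw [einner]; ring
    have e3 : (∑ y, ∑ z, (∑ x, P.p x y * (h x * h₂ z)) ^ 2 / (P.pY y * q z))
        = (∑ y, (∑ x, P.p x y * h x) ^ 2 / P.pY y) * (∑ z, h₂ z ^ 2 / q z) := by
      rw [Finset.sum_mul_sum]
      refine Finset.sum_congr rfl fun y _ => Finset.sum_congr rfl fun z _ => ?_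
      rw [einner]; ring
    have dX : delta2IXZtrivial P q (fun x z => h x * h₂ z)
        = ((∑ z, h₂ z ^ 2 / q z) / 2) *
          ((∑ x, P.pX x * h x ^ 2) - (∑ x, P.pX x * h x) ^ 2) := by
      simp only [delta2IXZtrivial]
      rw [e1, e2]; ring
    have dY : delta2IYZtrivial P q (fun x z => h x * h₂ z)
        = ((∑ z, h₂ z ^ 2 / q z) / 2) *
          ((∑ y, (∑ x, P.p x y * h x) ^ 2 / P.pY y) - (∑ x, P.pX x * h x) ^ 2) := by
      simp only [delta2IYZtrivial]
      rw [e3, e2]; ring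
    rw [dX, dY, beta0Func]
    exact mul_div_mul_left _ _ (by positivity)
  · -- Part 2: the Pareto bound
    intro h hden
    set m := ∑ x, P.pX x * h x with hm
    set E2 := ∑ x, P.pX x * h x ^ 2 with hE2
    set D := ∑ y, (∑ x, P.p x y * h x) ^ 2 / P.pY y with hD
    have hpY0 : ∀ y, P.pY y = 0 → ∀ x, P.p x y = 0 := by
      intro y hy x
      exact (Finset.sum_eq_zero_iff_of_nonneg (fun x' _ => P.nonneg x' y)).mp hy x
        (Finset.mem_univ x)
    set u : X → ℝ := fun x => h x - m with hu
    have hsum_u : ∑ x, P.pX x * u x = 0 := by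
      have : ∀ x, P.pX x * u x = P.pX x * h x - P.pX x * m := fun x => by
        simp only [hu]; ring
      rw [Finset.sum_congr rfl fun x _ => this x, Finset.sum_sub_distrib,
        ← Finset.sum_mul, IBaux.sum_pX P, ← hm]
      ring
    set A := ∑ x, P.pX x * (u x) ^ 2 with hA
    have hA_eq : A = E2 - m ^ 2 := by
      have : ∀ x, P.pX x * (u x) ^ 2
          = P.pX x * h x ^ 2 - (2 * m) * (P.pX x * h x) + m ^ 2 * P.pX x := fun x => by
        simp only [hu]; ring
      rw [hA, Finset.sum_congr rfl fun x _ => this x, Finset.sum_add_distrib,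
        Finset.sum_sub_distrib, ← Finset.mul_sum, ← Finset.mul_sum, IBaux.sum_pX P,
        ← hm, ← hE2]
      ring
    set w : Y → ℝ := fun y => ∑ x, P.p x y * u x with hw
    set v : Y → ℝ := fun y => w y / P.pY y with hv
    set B := ∑ y, P.pY y * (v y) ^ 2 with hB
    have hmswap : ∑ y, ∑ x, P.p x y * h x = m := by
      rw [Finset.sum_comm, hm]
      refine Finset.sum_congr rfl fun x _ => ?_
      rw [JointDist.pX, Finset.sum_mul]
    have hB_eq : B = D - m ^ 2 := by
      have key : ∀ y, P.pY y * (v y) ^ 2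
          = (∑ x, P.p x y * h x) ^ 2 / P.pY y - (2 * m) * (∑ x, P.p x y * h x)
            + m ^ 2 * P.pY y := by
        intro y
        rcases eq_or_lt_of_le (IBaux.pY_nonneg P y) with hy | hy
        · have hz : ∑ x, P.p x y * h x = 0 :=
            Finset.sum_eq_zero fun x _ => by rw [hpY0 y hy.symm x]; ring
          rw [hz, ← hy]
          simp
        · have hwy : w y = (∑ x, P.p x y * h x) - m * P.pY y := by
            simp only [hw, hu]
            have : ∀ x, P.p x y * (h x - m) = P.p x y * h x - m * (P.p x y) := fun x => by ring
            rw [Finset.sum_congr rfl fun x _ => this x, Finset.sum_sub_distrib,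
              ← Finset.mul_sum, JointDist.pY]
          simp only [hv]
          rw [hwy]
          field_simp
          ring
      rw [hB, Finset.sum_congr rfl fun y _ => key y, Finset.sum_add_distrib,
        Finset.sum_sub_distrib, ← Finset.mul_sum, ← Finset.mul_sum, hmswap,
        IBaux.sum_pY P, ← hD]
      ring
    have hB_pos : 0 < B := by rw [hB_eq]; linarith [hden]
    have hD_le_E2 : D ≤ E2 := by
      have key : ∀ y, (∑ x, P.p x y * h x) ^ 2 / P.pY y ≤ ∑ x, P.p x y * h x ^ 2 := by
        intro y
        rcases eq_or_lt_of_le (IBaux.pY_nonneg P y) with hy | hy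
        · have hz : ∑ x, P.p x y * h x = 0 :=
            Finset.sum_eq_zero fun x _ => by rw [hpY0 y hy.symm x]; ring
          rw [hz]
          have hzz : (0:ℝ) ^ 2 / P.pY y = 0 := by norm_num
          rw [hzz]
          exact Finset.sum_nonneg fun x _ => mul_nonneg (P.nonneg x y) (sq_nonneg _)
        · rw [div_le_iff₀ hy]
          have cs := Finset.sum_mul_sq_le_sq_mul_sq Finset.univ
            (fun x => Real.sqrt (P.p x y)) (fun x => Real.sqrt (P.p x y) * h x)
          have h1 : ∀ x, Real.sqrt (P.p x y) * (Real.sqrt (P.p x y) * h x) = P.p x y * h x := by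
            intro x
            rw [← mul_assoc, Real.mul_self_sqrt (P.nonneg x y)]
          have h2 : ∀ x, (Real.sqrt (P.p x y)) ^ 2 = P.p x y := fun x =>
            Real.sq_sqrt (P.nonneg x y)
          have h3 : ∀ x, (Real.sqrt (P.p x y) * h x) ^ 2 = P.p x y * h x ^ 2 := by
            intro x
            rw [mul_pow, h2]
          rw [Finset.sum_congr rfl fun x _ => h1 x] at cs
          rw [Finset.sum_congr rfl fun x _ => h2 x] at cs
          rw [Finset.sum_congr rfl fun x _ => h3 x] at cs
          calc (∑ x, P.p x y * h x) ^ 2 ≤ (∑ x, P.p x y) * ∑ x, P.p x y * h x ^ 2 := cs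
            _ = (∑ x, P.p x y * h x ^ 2) * P.pY y := by rw [JointDist.pY]; ring
      calc D ≤ ∑ y, ∑ x, P.p x y * h x ^ 2 := Finset.sum_le_sum fun y _ => key y
        _ = E2 := by
          rw [Finset.sum_comm, hE2]
          refine Finset.sum_congr rfl fun x _ => ?_
          rw [JointDist.pX, Finset.sum_mul]
    have hA_pos : 0 < A := by
      rw [hA_eq]
      linarith [hden, hD_le_E2]
    -- the perturbation magnitude control
    set M := (∑ x, |u x|) + 1 with hM
    have hM_pos : 0 < M := by
      have : 0 ≤ ∑ x, |u x| := Finset.sum_nonneg fun x _ => abs_nonneg _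
      rw [hM]; linarith
    have huM : ∀ x, |u x| ≤ M := by
      intro x
      calc |u x| ≤ ∑ x', |u x'| :=
            Finset.single_le_sum (fun x' _ => abs_nonneg (u x')) (Finset.mem_univ x)
        _ ≤ M := by rw [hM]; linarith
    set δ := 1 / (2 * M) with hδdef
    have hδ : 0 < δ := by rw [hδdef]; positivity
    set tc : ℝ → ℝ := fun ε => max (-δ) (min δ ε) with htc
    have htc_abs : ∀ ε, |tc ε| ≤ δ := by
      intro ε
      rw [abs_le]
      constructor
      · exact le_max_left _ _
      · exact max_le (by linarith) (min_le_left _ _)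
    have htc_eq : ∀ ε, |ε| ≤ δ → tc ε = ε := by
      intro ε hε
      rw [abs_le] at hε
      simp only [htc]
      rw [min_eq_right hε.2, max_eq_right hε.1]
    have htcu : ∀ ε x, |tc ε * u x| ≤ 1/2 := by
      intro ε x
      calc |tc ε * u x| = |tc ε| * |u x| := abs_mul _ _
        _ ≤ δ * M := mul_le_mul (htc_abs ε) (huM x) (abs_nonneg _) hδ.le
        _ = 1/2 := by rw [hδdef]; field_simp
    have enc_nonneg : ∀ ε x (z : Fin 2),
        (0:ℝ) ≤ 1/2 + (if z = 0 then 1 else -1) * (tc ε * u x) := by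
      intro ε x z
      have h1 := abs_le.mp (htcu ε x)
      by_cases hz : z = 0
      · rw [if_pos hz]; linarith [h1.1]
      · rw [if_neg hz]; linarith [h1.2]
    have hif0 : (if (0:Fin 2) = 0 then (1:ℝ) else -1) = 1 := if_pos rfl
    have hif1 : (if (1:Fin 2) = 0 then (1:ℝ) else -1) = -1 := if_neg (by decide)
    set e : ℝ → Encoder X (Fin 2) := fun ε =>
      ⟨fun x z => 1/2 + (if z = 0 then 1 else -1) * (tc ε * u x), enc_nonneg ε,
        fun x => by simp only [Fin.sum_univ_two]; norm_num; ring⟩ with he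
    have hcdef : ∀ ε x (z : Fin 2),
        (e ε).c x z = 1/2 + (if z = 0 then 1 else -1) * (tc ε * u x) := fun ε x z => rfl
    -- marginal of z is 1/2
    have hmarg : ∀ ε (z : Fin 2), (∑ x, P.pX x * (e ε).c x z) = 1/2 := by
      intro ε z
      have hterm : ∀ x, P.pX x * (e ε).c x z
          = P.pX x * (1/2) + ((if z = 0 then (1:ℝ) else -1) * tc ε) * (P.pX x * u x) := by
        intro x
        rw [hcdef]; ring
      rw [Finset.sum_congr rfl fun x _ => hterm x, Finset.sum_add_distrib,
        ← Finset.sum_mul, ← Finset.mul_sum, IBaux.sum_pX P, hsum_u]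
      ring
    -- IXZ formula
    have hIXZf : ∀ ε, IXZ P (e ε) = ∑ x, P.pX x * phiIB (tc ε * u x) := by
      intro ε
      rw [IXZ]
      refine Finset.sum_congr rfl fun x _ => ?_
      rw [Fin.sum_univ_two, hmarg ε 0, hmarg ε 1]
      rcases eq_or_lt_of_le (IBaux.pX_nonneg P x) with hx0 | hx0
      · rw [← hx0]; simp
      · have hc0 : (e ε).c x 0 = 1/2 + tc ε * u x := by rw [hcdef, if_pos rfl]; ring
        have hc1 : (e ε).c x 1 = 1/2 - tc ε * u x := by rw [hcdef, if_neg (by decide)]; ring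
        rw [hc0, hc1, mul_div_mul_left _ _ hx0.ne', mul_div_mul_left _ _ hx0.ne']
        have harg0 : (1/2 + tc ε * u x) / (1/2 : ℝ) = 1 + 2*(tc ε * u x) := by ring
        have harg1 : (1/2 - tc ε * u x) / (1/2 : ℝ) = 1 - 2*(tc ε * u x) := by ring
        rw [harg0, harg1, phiIB]
        ring
    -- IYZ formula
    have hIYZf : ∀ ε, IYZ P (e ε) = ∑ y, P.pY y * phiIB (tc ε * v y) := by
      intro ε
      rw [IYZ]
      refine Finset.sum_congr rfl fun y _ => ?_
      rw [Fin.sum_univ_two, hmarg ε 0, hmarg ε 1]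
      have ha : ∀ z : Fin 2, (∑ x, P.p x y * (e ε).c x z)
          = P.pY y * (1/2) + (if z = 0 then (1:ℝ) else -1) * (tc ε * w y) := by
        intro z
        have hterm : ∀ x, P.p x y * (e ε).c x z
            = P.p x y * (1/2) + ((if z = 0 then (1:ℝ) else -1) * tc ε) * (P.p x y * u x) := by
          intro x
          rw [hcdef]; ring
        rw [Finset.sum_congr rfl fun x _ => hterm x, Finset.sum_add_distrib,
          ← Finset.sum_mul, ← Finset.mul_sum]
        have : (∑ x, P.p x y) = P.pY y := rfl
        rw [this]
        have : (∑ x, P.p x y * u x) = w y := rfl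
        rw [this]
        ring
      rw [ha 0, ha 1, hif0, hif1]
      rcases eq_or_lt_of_le (IBaux.pY_nonneg P y) with hy | hy
      · have hwy : w y = 0 :=
          Finset.sum_eq_zero fun x _ => by rw [hpY0 y hy.symm x]; ring
        rw [← hy, hwy]
        norm_num
      · have key0 : P.pY y * (1/2) + 1 * (tc ε * w y) = P.pY y * (1/2 + tc ε * v y) := by
          simp only [hv]
          field_simp
        have key1 : P.pY y * (1/2) + (-1) * (tc ε * w y) = P.pY y * (1/2 - tc ε * v y) := by
          simp only [hv]
          field_simp
          ring
        rw [key0, key1, mul_div_mul_left _ _ hy.ne', mul_div_mul_left _ _ hy.ne']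
        have harg0 : (1/2 + tc ε * v y) / (1/2 : ℝ) = 1 + 2*(tc ε * v y) := by ring
        have harg1 : (1/2 - tc ε * v y) / (1/2 : ℝ) = 1 - 2*(tc ε * v y) := by ring
        rw [harg0, harg1, phiIB]
        ring
    -- limits
    have hδε : ∀ᶠ ε in 𝓝[≠] (0:ℝ), |ε| ≤ δ := by
      have hIoo : Set.Ioo (-δ) δ ∈ 𝓝 (0:ℝ) := Ioo_mem_nhds (by linarith) hδ
      exact eventually_nhdsWithin_of_eventually_nhds
        (eventually_of_mem hIoo fun ε hε => abs_le.mpr ⟨hε.1.le, hε.2.le⟩)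
    have hXlim : Tendsto (fun ε => IXZ P (e ε) / ε^2) (𝓝[≠] (0:ℝ)) (𝓝 (2*A)) := by
      apply (IBaux.tendsto_phiIB_sum (fun x => P.pX x) u).congr'
      filter_upwards [hδε] with ε hε
      rw [hIXZf ε, htc_eq ε hε]
    have hYlim : Tendsto (fun ε => IYZ P (e ε) / ε^2) (𝓝[≠] (0:ℝ)) (𝓝 (2*B)) := by
      apply (IBaux.tendsto_phiIB_sum (fun y => P.pY y) v).congr'
      filter_upwards [hδε] with ε hε
      rw [hIYZf ε, htc_eq ε hε]
    have h2A : (0:ℝ) < 2*A := by linarith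
    have hevpos : ∀ᶠ ε in 𝓝[≠] (0:ℝ), 0 < IXZ P (e ε) := by
      have h1 := hXlim.eventually (eventually_gt_nhds h2A)
      filter_upwards [h1, eventually_mem_nhdsWithin] with ε hgt hε0
      have hne : (ε:ℝ) ≠ 0 := hε0
      have hε2 : (0:ℝ) < ε^2 := by positivity
      have := mul_pos hgt hε2
      rwa [div_mul_cancel₀ _ hε2.ne'] at this
    have heqr : (fun ε : ℝ => IYZ P (e ε) / ε^2 / (IXZ P (e ε) / ε^2))
        =ᶠ[𝓝[≠] (0:ℝ)] (fun ε => IYZ P (e ε) / IXZ P (e ε)) := by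
      filter_upwards [eventually_mem_nhdsWithin] with ε hε
      have hε2 : (ε:ℝ)^2 ≠ 0 := pow_ne_zero _ hε
      rw [div_div_div_comm, div_self hε2, div_one]
    have hratio : Tendsto (fun ε => IYZ P (e ε) / IXZ P (e ε)) (𝓝[≠] (0:ℝ))
        (𝓝 (2*B/(2*A))) := Tendsto.congr' heqr (hYlim.div hXlim h2A.ne')
    have hbdd : BddAbove {r : ℝ | ∃ (n : ℕ) (e' : Encoder X (Fin n)),
        0 < IXZ P e' ∧ r = IYZ P e' / IXZ P e'} := by
      refine ⟨1, fun r hr => ?_⟩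
      obtain ⟨n, e', he', hre⟩ := hr
      rw [hre]
      exact (div_le_one he').mpr (IBaux.dpi P e')
    have hmem : ∀ᶠ ε in 𝓝[≠] (0:ℝ), IYZ P (e ε) / IXZ P (e ε) ≤ paretoSlopeOrigin P := by
      filter_upwards [hevpos] with ε hpos
      have hmemS : IYZ P (e ε) / IXZ P (e ε) ∈ {r : ℝ | ∃ (n : ℕ) (e' : Encoder X (Fin n)),
          0 < IXZ P e' ∧ r = IYZ P e' / IXZ P e'} := ⟨2, e ε, hpos, rfl⟩
      rw [paretoSlopeOrigin]
      exact le_csSup hbdd hmemS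
    have hfinal : 2*B/(2*A) ≤ paretoSlopeOrigin P := le_of_tendsto hratio hmem
    have h2B2A : 2*B/(2*A) = B/A := mul_div_mul_left _ _ two_ne_zero
    have hbeta : (beta0Func P h)⁻¹ = B / A := by
      have hb : beta0Func P h = (E2 - m^2) / (D - m^2) := rfl
      rw [hb, inv_div, hA_eq, hB_eq]
    rw [hbeta, ← h2B2A]
    exact hfinal
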